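/- Let X be a topological space with a weight function w on its continuous paths satisfying the w-space axioms. For a continuous path a : [0,1] → X, define L(a) = sup over all partitions 0 = t_0 < t_1 < … < t_p = 1 of Σ_{i=1}^p w(a⟨t_{i-1},t_i⟩), where a⟨s,t⟩(u) = a((1−u)·s + u·t) is the restriction of a to [s,t] reparametrised affinely on [0,1]. Then L is the least linear weight above w: (i) L satisfies the w-space axioms; (ii) L is linear, i.e. L(a + b) = L(a) + L(b) for every concatenation; (iii) L(a) ≥ w(a) for every path a; and (iv) if v is any weight function on the continuous paths of X satisfying the w-space axioms, linear, and with v ≥ w pointwise, then v ≥ L pointwise. -/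

import Mathlib

open scoped ENNReal
open unitInterval
noncomputable def concat {X : Type*} (a b : unitInterval → X) : unitInterval → X := fun t =>
  if h : (t : ℝ) ≤ 1 / 2 then
    a ⟨2 * (t : ℝ), Set.mem_Icc.mpr ⟨by have := t.2.1; linarith, by linarith⟩⟩
  else
    b ⟨2 * (t : ℝ) - 1, Set.mem_Icc.mpr ⟨by push_neg at h; linarith, by have := t.2.2; linarith⟩⟩

noncomputable def subpath {X : Type*} (a : unitInterval → X) (s t : unitInterval) :
    unitInterval → X := fun u =>
  a ⟨(1 - (u : ℝ)) * (s : ℝ) + (u : ℝ) * (t : ℝ), Set.mem_Icc.mpr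
    ⟨by
      have h1 : (0:ℝ) ≤ (1 - (u : ℝ)) * (s : ℝ) :=
        mul_nonneg (by have := u.2.2; linarith) s.2.1
      have h2 : (0:ℝ) ≤ (u : ℝ) * (t : ℝ) := mul_nonneg u.2.1 t.2.1
      linarith,
     by
      have h1 : (1 - (u : ℝ)) * (s : ℝ) ≤ (1 - (u : ℝ)) * 1 :=
        mul_le_mul_of_nonneg_left s.2.2 (by have := u.2.2; linarith)
      have h2 : (u : ℝ) * (t : ℝ) ≤ (u : ℝ) * 1 :=
        mul_le_mul_of_nonneg_left t.2.2 u.2.1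
      linarith⟩⟩

noncomputable def linWeight {X : Type*} (w : (unitInterval → X) → ℝ≥0∞)
    (a : unitInterval → X) : ℝ≥0∞ :=
  ⨆ P : {q : ℕ × (ℕ → unitInterval) //
      q.2 0 = 0 ∧ q.2 q.1 = 1 ∧ ∀ i < q.1, q.2 i < q.2 (i + 1)},
    ∑ i ∈ Finset.range P.val.1, w (subpath a (P.val.2 i) (P.val.2 (i + 1)))

namespace LinAux
variable {X : Type*}

/-- The partition type. -/
abbrev Part := {q : ℕ × (ℕ → unitInterval) //
      q.2 0 = 0 ∧ q.2 q.1 = 1 ∧ ∀ i < q.1, q.2 i < q.2 (i + 1)}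

instance : Nonempty Part := ⟨⟨(1, fun i => if i = 0 then 0 else 1), by
  refine ⟨by simp, by simp, fun i hi => ?_⟩
  interval_cases i
  simp only [if_pos rfl, if_neg one_ne_zero]
  norm_num [← Subtype.coe_lt_coe]⟩⟩

lemma aeq (a : unitInterval → X) {x y : ℝ} {hx : x ∈ Set.Icc (0:ℝ) 1}
    {hy : y ∈ Set.Icc (0:ℝ) 1} (h : x = y) : a ⟨x, hx⟩ = a ⟨y, hy⟩ :=
  congrArg a (Subtype.ext h)

lemma subpath_self (a : unitInterval → X) : subpath a 0 1 = a := by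
  funext u
  show a _ = a u
  rw [show u = ⟨(u:ℝ), u.2⟩ from rfl]
  exact aeq a (by push_cast; ring)

lemma subpath_const (x : X) (s t : unitInterval) :
    subpath (fun _ => x) s t = fun _ => x := rfl

lemma subpath_subpath (a : unitInterval → X) (s t α β s' t' : unitInterval)
    (hs' : (s' : ℝ) = (1 - (α:ℝ)) * s + α * t) (ht' : (t' : ℝ) = (1 - (β:ℝ)) * s + β * t) :
    subpath (subpath a s t) α β = subpath a s' t' := by
  funext u
  show a _ = a _
  exact aeq a (by rw [hs', ht']; ring)

lemma continuous_subpath {a : unitInterval → X} [TopologicalSpace X] (ha : Continuous a)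
    (s t : unitInterval) : Continuous (subpath a s t) := by
  apply ha.comp
  apply Continuous.subtype_mk
  fun_prop

lemma continuous_concat [TopologicalSpace X] {a b : unitInterval → X}
    (ha : Continuous a) (hb : Continuous b) (hab : a 1 = b 0) :
    Continuous (concat a b) := by
  let pa : Path (a 0) (a 1) := ⟨⟨a, ha⟩, rfl, rfl⟩
  let pb : Path (a 1) (b 1) := ⟨⟨b, hb⟩, hab.symm, rfl⟩
  have : concat a b = ⇑(pa.trans pb) := by
    funext t
    rw [Path.trans_apply]
    simp only [concat]
    split_ifs <;> rfl
  rw [this]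
  exact (pa.trans pb).continuous



/-- Two-piece linear map sending `[0,c]` to `[0,d]` and `[c,1]` to `[d,1]` affinely. -/
noncomputable def pl (c d u : ℝ) : ℝ :=
  if u ≤ c then d * u / c else d + (u - c) * (1 - d) / (1 - c)

lemma pl_mem {c d : ℝ} (hc0 : 0 < c) (hc1 : c < 1) (hd0 : 0 < d) (hd1 : d < 1)
    {u : ℝ} (hu : u ∈ Set.Icc (0:ℝ) 1) : pl c d u ∈ Set.Icc (0:ℝ) 1 := by
  unfold pl
  split_ifs with h
  · constructor
    · exact div_nonneg (by nlinarith [hu.1]) hc0.le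
    · rw [div_le_one hc0]; nlinarith [hu.1]
  · push_neg at h
    have h1 : 0 ≤ (u - c) * (1 - d) / (1 - c) :=
      div_nonneg (by nlinarith) (by linarith)
    have h2 : (u - c) * (1 - d) / (1 - c) ≤ 1 - d := by
      rw [div_le_iff₀ (by linarith : (0:ℝ) < 1 - c)]
      nlinarith [hu.2]
    constructor <;> linarith

noncomputable def plI (c d : ℝ) (hc0 : 0 < c) (hc1 : c < 1) (hd0 : 0 < d) (hd1 : d < 1) :
    unitInterval → unitInterval :=
  fun u => ⟨pl c d u, pl_mem hc0 hc1 hd0 hd1 u.2⟩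

lemma continuous_pl {c d : ℝ} (hc0 : 0 < c) (hc1 : c < 1) : Continuous (pl c d) := by
  unfold pl
  apply Continuous.if_le (by fun_prop) (by fun_prop) continuous_id continuous_const
  intro x hx
  simp only [id] at hx
  subst hx
  field_simp
  ring

lemma continuous_plI {c d : ℝ} (hc0 : 0 < c) (hc1 : c < 1) (hd0 : 0 < d) (hd1 : d < 1) :
    Continuous (plI c d hc0 hc1 hd0 hd1) :=
  Continuous.subtype_mk ((continuous_pl hc0 hc1).comp continuous_subtype_val) _

lemma strictMono_pl {c d : ℝ} (hc0 : 0 < c) (hc1 : c < 1) (hd0 : 0 < d) (hd1 : d < 1) :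
    StrictMono (pl c d) := by
  intro u v huv
  unfold pl
  split_ifs with h1 h2 h2
  · exact div_lt_div_of_pos_right (by nlinarith) hc0
  · have e1 : d * u / c ≤ d := by
      rw [div_le_iff₀ hc0]; nlinarith
    have e2 : 0 < (v - c) * (1 - d) / (1 - c) := by
      apply div_pos (by push_neg at h2; nlinarith) (by linarith)
    linarith
  · exact absurd (le_trans huv.le h2) h1
  · push_neg at h1 h2
    have : (u - c) * (1 - d) / (1 - c) < (v - c) * (1 - d) / (1 - c) :=
      div_lt_div_of_pos_right (by nlinarith) (by linarith)
    linarith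

lemma strictMono_plI {c d : ℝ} (hc0 : 0 < c) (hc1 : c < 1) (hd0 : 0 < d) (hd1 : d < 1) :
    StrictMono (plI c d hc0 hc1 hd0 hd1) := fun u v huv =>
  Subtype.mk_lt_mk.mpr (strictMono_pl hc0 hc1 hd0 hd1 (Subtype.coe_lt_coe.mpr huv))



section Subdiv
variable {X : Type*}

lemma pl_of_le {c d u : ℝ} (h : u ≤ c) : pl c d u = d * u / c := if_pos h
lemma pl_of_gt {c d u : ℝ} (h : c < u) : pl c d u = d + (u - c) * (1 - d) / (1 - c) :=
  if_neg (not_le.mpr h)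

namespace Subdiv

noncomputable def lam (s m t : unitInterval) : ℝ := ((m:ℝ) - s) / ((t:ℝ) - s)

lemma hst {s m t : unitInterval} (hsm : s < m) (hmt : m < t) : (s:ℝ) < t :=
  lt_trans (Subtype.coe_lt_coe.mpr hsm) (Subtype.coe_lt_coe.mpr hmt)

lemma lam_pos {s m t : unitInterval} (hsm : s < m) (hmt : m < t) : 0 < lam s m t :=
  div_pos (by have := Subtype.coe_lt_coe.mpr hsm; linarith)
    (by have := hst hsm hmt; linarith)

lemma lam_lt_one {s m t : unitInterval} (hsm : s < m) (hmt : m < t) : lam s m t < 1 := by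
  rw [lam, div_lt_one (by have := hst hsm hmt; linarith)]
  have := Subtype.coe_lt_coe.mpr hmt; linarith

lemma m_eq {s m t : unitInterval} (hsm : s < m) (hmt : m < t) :
    (m:ℝ) = s + lam s m t * ((t:ℝ) - s) := by
  have h : (t:ℝ) - s ≠ 0 := by have := hst hsm hmt; linarith
  rw [lam]
  field_simp
  ring

/-- `σ` : maps `lam ↦ 1/2`. -/
noncomputable def sig {s m t : unitInterval} (hsm : s < m) (hmt : m < t) :
    unitInterval → unitInterval :=
  plI (lam s m t) (1/2) (lam_pos hsm hmt) (lam_lt_one hsm hmt) (by norm_num) (by norm_num)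

/-- `σ'` : maps `1/2 ↦ lam` (inverse of `sig`). -/
noncomputable def sig' {s m t : unitInterval} (hsm : s < m) (hmt : m < t) :
    unitInterval → unitInterval :=
  plI (1/2) (lam s m t) (by norm_num) (by norm_num) (lam_pos hsm hmt) (lam_lt_one hsm hmt)

variable (c : unitInterval → X) {s m t : unitInterval} (hsm : s < m) (hmt : m < t)

lemma seq1 : concat (subpath c s m) (subpath c m t) ∘ sig hsm hmt = subpath c s t := by
  funext u
  have hl0 := lam_pos hsm hmt
  have hl1 := lam_lt_one hsm hmt
  have hme := m_eq hsm hmt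
  have hts : (s:ℝ) < t := hst hsm hmt
  show concat _ _ (plI _ _ _ _ _ _ u) = _
  by_cases h : (u:ℝ) ≤ lam s m t
  · have hpl : pl (lam s m t) (1/2) u = (1/2) * u / lam s m t := pl_of_le h
    have hcond : pl (lam s m t) (1/2) u ≤ 1/2 := by
      rw [hpl, div_le_iff₀ hl0]; nlinarith [(u.2.1 : (0:ℝ) ≤ u)]
    show concat _ _ ⟨pl _ _ _, _⟩ = _
    unfold concat
    rw [dif_pos hcond]
    show subpath c s m ⟨2 * pl _ _ _, _⟩ = _
    show c _ = c _
    apply aeq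
    show (1 - 2 * pl (lam s m t) (1/2) u) * (s:ℝ) + 2 * pl (lam s m t) (1/2) u * m
        = (1 - (u:ℝ)) * s + u * t
    have hx : 2 * pl (lam s m t) (1/2) (u:ℝ) = (u:ℝ) / lam s m t := by rw [hpl]; ring
    have hms : (m:ℝ) - s = lam s m t * ((t:ℝ) - s) := by rw [hme]; ring
    have h2 : (u:ℝ) / lam s m t * ((m:ℝ) - s) = (u:ℝ) * ((t:ℝ) - s) := by
      rw [hms]; field_simp
    rw [hx]
    linear_combination h2
  · push_neg at h
    have hpl : pl (lam s m t) (1/2) u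
        = 1/2 + ((u:ℝ) - lam s m t) * (1 - 1/2) / (1 - lam s m t) := pl_of_gt h
    have hcond : ¬ (pl (lam s m t) (1/2) u ≤ 1/2) := by
      rw [hpl]
      have : 0 < ((u:ℝ) - lam s m t) * (1 - 1/2) / (1 - lam s m t) :=
        div_pos (by nlinarith) (by linarith)
      linarith
    show concat _ _ ⟨pl _ _ _, _⟩ = _
    unfold concat
    rw [dif_neg hcond]
    show subpath c m t ⟨2 * pl _ _ _ - 1, _⟩ = _
    show c _ = c _
    apply aeq
    show (1 - (2 * pl (lam s m t) (1/2) u - 1)) * (m:ℝ) + (2 * pl (lam s m t) (1/2) u - 1) * t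
        = (1 - (u:ℝ)) * s + u * t
    have hne : (1:ℝ) - lam s m t ≠ 0 := by linarith
    have hx : 2 * pl (lam s m t) (1/2) (u:ℝ) - 1
        = ((u:ℝ) - lam s m t) / (1 - lam s m t) := by rw [hpl]; ring
    have htm : (t:ℝ) - m = (1 - lam s m t) * ((t:ℝ) - s) := by rw [hme]; ring
    have h2 : ((u:ℝ) - lam s m t) / (1 - lam s m t) * ((t:ℝ) - m)
        = ((u:ℝ) - lam s m t) * ((t:ℝ) - s) := by
      rw [htm]; field_simp
    rw [hx]
    linear_combination hme + h2

lemma seq2 : subpath c s t ∘ sig' hsm hmt = concat (subpath c s m) (subpath c m t) := by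
  funext u
  have hl0 := lam_pos hsm hmt
  have hl1 := lam_lt_one hsm hmt
  have hme := m_eq hsm hmt
  have hts : (s:ℝ) < t := hst hsm hmt
  show subpath c s t (plI _ _ _ _ _ _ u) = concat _ _ u
  unfold concat
  by_cases h : (u:ℝ) ≤ 1/2
  · have hpl : pl (1/2) (lam s m t) u = lam s m t * u / (1/2) := pl_of_le h
    rw [dif_pos h]
    show c _ = subpath c s m _
    show c _ = c _
    apply aeq
    show (1 - pl (1/2) (lam s m t) u) * (s:ℝ) + pl (1/2) (lam s m t) u * t
        = (1 - 2 * (u:ℝ)) * s + 2 * (u:ℝ) * m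
    have hms : (m:ℝ) - s = lam s m t * ((t:ℝ) - s) := by rw [hme]; ring
    rw [hpl]
    linear_combination (-(2*(u:ℝ))) * hms
  · push_neg at h
    have hpl : pl (1/2) (lam s m t) u
        = lam s m t + ((u:ℝ) - 1/2) * (1 - lam s m t) / (1 - 1/2) := pl_of_gt h
    rw [dif_neg (not_le.mpr h)]
    show c _ = subpath c m t _
    show c _ = c _
    apply aeq
    show (1 - pl (1/2) (lam s m t) u) * (s:ℝ) + pl (1/2) (lam s m t) u * t
        = (1 - (2 * (u:ℝ) - 1)) * m + (2 * (u:ℝ) - 1) * t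
    have htm : (t:ℝ) - m = (1 - lam s m t) * ((t:ℝ) - s) := by rw [hme]; ring
    rw [hpl]
    linear_combination (-1:ℝ) * hme - (2*(u:ℝ)-1) * htm

end Subdiv
end Subdiv

section WV
variable {X : Type*} [TopologicalSpace X]
variable {w : (unitInterval → X) → ℝ≥0∞}
variable {c : unitInterval → X}
variable {s m t : unitInterval}

lemma fg_cont (hsm : s < m) (hmt : m < t) :
    subpath c s m 1 = subpath c m t 0 := by
  show c _ = c _
  exact aeq c (by push_cast; ring)

/-- Lemma S: subdivision inequality for `w`. -/
lemma w_subdiv (hc : Continuous c) (hsm : s < m) (hmt : m < t)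
    (hw1 : ∀ a b : unitInterval → X, Continuous a → Continuous b → a 1 = b 0 →
      w (concat a b) ≤ w a + w b)
    (hw2 : ∀ (a : unitInterval → X) (ρ : unitInterval → unitInterval),
      Continuous a → Continuous ρ → StrictMono ρ → w (a ∘ ρ) ≤ w a) :
    w (subpath c s t) ≤ w (subpath c s m) + w (subpath c m t) := by
  have h1 := Subdiv.seq1 c hsm hmt
  have hfg := fg_cont (c := c) hsm hmt
  have hcf := continuous_subpath hc s m
  have hcg := continuous_subpath hc m t
  have hcc : Continuous (concat (subpath c s m) (subpath c m t)) :=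
    continuous_concat hcf hcg hfg
  calc w (subpath c s t)
      = w (concat (subpath c s m) (subpath c m t) ∘ Subdiv.sig hsm hmt) := by rw [h1]
    _ ≤ w (concat (subpath c s m) (subpath c m t)) :=
        hw2 _ _ hcc (continuous_plI _ _ _ _) (strictMono_plI _ _ _ _)
    _ ≤ w (subpath c s m) + w (subpath c m t) := hw1 _ _ hcf hcg hfg

/-- Lemma V: superadditivity for a linear weight `v`. -/
lemma v_subdiv (hc : Continuous c) (hsm : s < m) (hmt : m < t) {v : (unitInterval → X) → ℝ≥0∞}
    (hv1 : ∀ a b : unitInterval → X, Continuous a → Continuous b → a 1 = b 0 →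
      v (concat a b) = v a + v b)
    (hv2 : ∀ (a : unitInterval → X) (ρ : unitInterval → unitInterval),
      Continuous a → Continuous ρ → StrictMono ρ → v (a ∘ ρ) ≤ v a) :
    v (subpath c s m) + v (subpath c m t) ≤ v (subpath c s t) := by
  have h2 := Subdiv.seq2 c hsm hmt
  have hfg := fg_cont (c := c) hsm hmt
  have hcf := continuous_subpath hc s m
  have hcg := continuous_subpath hc m t
  calc v (subpath c s m) + v (subpath c m t)
      = v (concat (subpath c s m) (subpath c m t)) := (hv1 _ _ hcf hcg hfg).symm
    _ = v (subpath c s t ∘ Subdiv.sig' hsm hmt) := by rw [h2]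
    _ ≤ v (subpath c s t) :=
        hv2 _ _ (continuous_subpath hc s t) (continuous_plI _ _ _ _) (strictMono_plI _ _ _ _)

end WV

section Chain
variable {X : Type*} [TopologicalSpace X]

/-- Monotonicity of a chain. -/
lemma chain_mono {p : ℕ} {r : ℕ → unitInterval} (hr : ∀ i < p, r i < r (i + 1)) :
    ∀ i j, i ≤ j → j ≤ p → r i ≤ r j := by
  intro i j hij hjp
  induction j with
  | zero => simp_all
  | succ n ih =>
    rcases Nat.lt_or_ge i (n+1) with h | h
    · exact le_trans (ih (Nat.lt_succ_iff.mp h) (by omega)) (hr n (by omega)).le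
    · have : i = n + 1 := by omega
      subst this; rfl

lemma chain_strictMono {p : ℕ} {r : ℕ → unitInterval} (hr : ∀ i < p, r i < r (i + 1)) :
    ∀ i j, i < j → j ≤ p → r i < r j := by
  intro i j hij hjp
  have h1 : r i ≤ r (j - 1) := chain_mono hr i (j-1) (by omega) (by omega)
  have h2 : r (j - 1) < r j := by
    have := hr (j-1) (by omega)
    rwa [show j - 1 + 1 = j by omega] at this
  exact lt_of_le_of_lt h1 h2

/-- Lemma (E): any strictly increasing chain sum is bounded by `linWeight`. -/
lemma chain_sum_le {w : (unitInterval → X) → ℝ≥0∞} {a : unitInterval → X}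
    (q : ℕ) (s : ℕ → unitInterval) (hs : ∀ i < q, s i < s (i + 1)) :
    ∑ i ∈ Finset.range q, w (subpath a (s i) (s (i + 1))) ≤ linWeight w a := by
  classical
  set e0 : ℕ := if s 0 = 0 then 0 else 1 with he0
  set e1 : ℕ := if s q = 1 then 0 else 1 with he1
  set p : ℕ := e0 + q + e1 with hp
  set r : ℕ → unitInterval := fun i =>
    if i < e0 then 0 else if i - e0 ≤ q then s (i - e0) else 1 with hr
  have hr0 : r 0 = 0 := by
    by_cases h : s 0 = 0 <;> simp [hr, he0, h]
  have hrp : r p = 1 := by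
    by_cases h : s q = 1 <;> by_cases h0 : s 0 = 0 <;>
      simp [hr, hp, he0, he1, h, h0] <;> omega
  have hrmid : ∀ i, e0 ≤ i → i ≤ e0 + q → r i = s (i - e0) := by
    intro i h1 h2
    simp only [hr]
    rw [if_neg (by omega), if_pos (by omega)]
  have he0le : e0 ≤ 1 := by by_cases h : s 0 = 0 <;> simp [he0, h]
  have he1le : e1 ≤ 1 := by by_cases h : s q = 1 <;> simp [he1, h]
  have hrchain : ∀ i < p, r i < r (i + 1) := by
    intro i hi
    rcases Nat.lt_or_ge i e0 with h | h
    · -- i < e0, so e0 = 1, i = 0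
      have hie : i = 0 ∧ e0 = 1 := by omega
      obtain ⟨rfl, he⟩ := hie
      have hs0 : s 0 ≠ 0 := by by_contra hh; simp [he0, hh] at he
      rw [hr0, hrmid 1 (by omega) (by omega), he, Nat.sub_self]
      have hle : (0:unitInterval) ≤ s 0 := Subtype.coe_le_coe.mp (by simpa using (s 0).2.1)
      exact lt_of_le_of_ne hle (Ne.symm hs0)
    · rcases Nat.lt_or_ge (i - e0) q with h2 | h2
      · rw [hrmid i h (by omega), hrmid (i+1) (by omega) (by omega),
          show i + 1 - e0 = (i - e0) + 1 by omega]
        exact hs _ h2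
      · -- i - e0 ≥ q; since i < p = e0 + q + e1, we get e1 = 1 and i = e0 + q
        have he : e1 = 1 ∧ i = e0 + q := by omega
        obtain ⟨he, rfl⟩ := he
        have hsq : s q ≠ 1 := by by_contra hh; simp [he1, hh] at he
        have hlast : r (e0 + q + 1) = 1 := by
          simp only [hr]; rw [if_neg (by omega), if_neg (by omega)]
        rw [hrmid (e0+q) (by omega) (by omega), hlast, Nat.add_sub_cancel_left]
        have hle : s q ≤ 1 := Subtype.coe_le_coe.mp (by simpa using (s q).2.2)
        exact lt_of_le_of_ne hle hsq
  have key : ∑ i ∈ Finset.range q, w (subpath a (s i) (s (i + 1)))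
      ≤ ∑ i ∈ Finset.range p, w (subpath a (r i) (r (i + 1))) := by
    have heq : ∀ i ∈ Finset.range q,
        w (subpath a (s i) (s (i + 1))) = w (subpath a (r (e0 + i)) (r (e0 + i + 1))) := by
      intro i hi
      rw [Finset.mem_range] at hi
      rw [hrmid (e0+i) (by omega) (by omega), hrmid (e0+i+1) (by omega) (by omega),
        Nat.add_sub_cancel_left, show e0 + i + 1 - e0 = i + 1 by omega]
    rw [Finset.sum_congr rfl heq]
    have hsub : ∑ i ∈ Finset.range q, w (subpath a (r (e0 + i)) (r (e0 + i + 1)))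
        = ∑ i ∈ Finset.Ico e0 (e0 + q), w (subpath a (r i) (r (i + 1))) := by
      rw [Finset.sum_Ico_eq_sum_range]
      simp [Nat.add_sub_cancel_left, Nat.add_comm]
    rw [hsub]
    apply Finset.sum_le_sum_of_subset
    intro x hx
    rw [Finset.mem_Ico] at hx
    rw [Finset.mem_range]
    omega
  refine le_trans key ?_
  exact le_iSup (fun P : Part => ∑ i ∈ Finset.range P.val.1,
    w (subpath a (P.val.2 i) (P.val.2 (i + 1)))) ⟨(p, r), hr0, hrp, hrchain⟩

end Chain

section Split
variable {X : Type*} [TopologicalSpace X] {w : (unitInterval → X) → ℝ≥0∞}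

lemma split_ge (c : unitInterval → X) (m : unitInterval) (hm0 : 0 < m) (hm1 : m < 1) :
    linWeight w (subpath c 0 m) + linWeight w (subpath c m 1) ≤ linWeight w c := by
  have hm0R : (0:ℝ) < m := by have := Subtype.coe_lt_coe.mpr hm0; simpa using this
  have hm1R : (m:ℝ) < 1 := by have := Subtype.coe_lt_coe.mpr hm1; simpa using this
  rw [linWeight, linWeight, ENNReal.iSup_add]
  apply iSup_le
  rintro ⟨⟨p, tp⟩, hp0, hpp, hpc⟩
  rw [ENNReal.add_iSup]
  apply iSup_le
  rintro ⟨⟨q, tq⟩, hq0, hqq, hqc⟩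
  simp only at hp0 hpp hpc hq0 hqq hqc ⊢
  -- the combined chain
  set s : ℕ → unitInterval := fun i =>
    if i < p then ⟨(m:ℝ) * tp i, Set.mem_Icc.mpr ⟨mul_nonneg m.2.1 (tp i).2.1,
      by nlinarith [m.2.2, (tp i).2.1, (tp i).2.2]⟩⟩
    else ⟨(m:ℝ) + (1 - (m:ℝ)) * tq (i - p), Set.mem_Icc.mpr
      ⟨by nlinarith [m.2.1, m.2.2, (tq (i-p)).2.1], by nlinarith [m.2.2, (tq (i-p)).2.2]⟩⟩
    with hs
  have hsv1 : ∀ i ≤ p, (s i : ℝ) = (m:ℝ) * tp i := by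
    intro i hi
    rcases Nat.lt_or_ge i p with h | h
    · simp only [hs, if_pos h]
    · have hip : i = p := by omega
      rw [hip, hpp]
      simp only [hs]
      rw [if_neg (lt_irrefl p)]
      simp [Nat.sub_self, hq0]
  have hsv2 : ∀ i, p ≤ i → (s i : ℝ) = (m:ℝ) + (1 - (m:ℝ)) * tq (i - p) := by
    intro i hi
    simp only [hs, if_neg (by omega : ¬ i < p)]
  have hchain : ∀ i < p + q, s i < s (i + 1) := by
    intro i hi
    rw [← Subtype.coe_lt_coe]
    rcases Nat.lt_or_ge i p with h | h
    · rw [hsv1 i (by omega), hsv1 (i+1) (by omega)]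
      have := Subtype.coe_lt_coe.mpr (hpc i h)
      nlinarith
    · rw [hsv2 i h, hsv2 (i+1) (by omega), show i + 1 - p = (i - p) + 1 by omega]
      have := Subtype.coe_lt_coe.mpr (hqc (i - p) (by omega))
      nlinarith
  have key := chain_sum_le (w := w) (a := c) (p + q) s hchain
  rw [Finset.sum_range_add] at key
  refine le_trans (le_of_eq ?_) key
  congr 1
  · apply Finset.sum_congr rfl
    intro i hi
    rw [Finset.mem_range] at hi
    congr 1
    refine subpath_subpath c 0 m (tp i) (tp (i+1)) (s i) (s (i+1)) ?_ ?_
    · rw [hsv1 i (by omega)]; push_cast; ring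
    · rw [hsv1 (i+1) (by omega)]; push_cast; ring
  · apply Finset.sum_congr rfl
    intro i hi
    rw [Finset.mem_range] at hi
    congr 1
    refine subpath_subpath c m 1 (tq i) (tq (i+1)) (s (p+i)) (s (p+i+1)) ?_ ?_
    · rw [hsv2 (p+i) (by omega), Nat.add_sub_cancel_left]; push_cast; ring
    · rw [hsv2 (p+i+1) (by omega), show p + i + 1 - p = i + 1 by omega]; push_cast; ring

lemma split_le (c : unitInterval → X) (hc : Continuous c)
    (m : unitInterval) (hm0 : 0 < m) (hm1 : m < 1)
    (hw1 : ∀ a b : unitInterval → X, Continuous a → Continuous b → a 1 = b 0 →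
      w (concat a b) ≤ w a + w b)
    (hw2 : ∀ (a : unitInterval → X) (ρ : unitInterval → unitInterval),
      Continuous a → Continuous ρ → StrictMono ρ → w (a ∘ ρ) ≤ w a) :
    linWeight w c ≤ linWeight w (subpath c 0 m) + linWeight w (subpath c m 1) := by
  classical
  have hm0R : (0:ℝ) < m := by have := Subtype.coe_lt_coe.mpr hm0; simpa using this
  have hm1R : (m:ℝ) < 1 := by have := Subtype.coe_lt_coe.mpr hm1; simpa using this
  rw [linWeight]
  apply iSup_le
  rintro ⟨⟨p, r⟩, h0, hp, hcn⟩
  simp only at h0 hp hcn ⊢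
  have hmne : (m:ℝ) ≠ 0 := ne_of_gt hm0R
  have h1mne : (1:ℝ) - m ≠ 0 := by linarith
  have rmono := chain_mono hcn
  set k := Nat.findGreatest (fun i => r i ≤ m) p with hk
  have hkle : k ≤ p := Nat.findGreatest_le p
  have hkP : r k ≤ m := Nat.findGreatest_spec (P := fun i => r i ≤ m) (Nat.zero_le p) (show r 0 ≤ m by rw [h0]; exact hm0.le)
  have hkp : k < p := by
    rcases Nat.lt_or_ge k p with h | h
    · exact h
    · exfalso
      have hkp' : k = p := by omega
      rw [hkp', hp] at hkP
      exact absurd (lt_of_lt_of_le hm1 hkP) (lt_irrefl _)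
  have hk1 : m < r (k + 1) :=
    not_le.mp (Nat.findGreatest_is_greatest (P := fun i => r i ≤ m) (n := p)
      (by omega) (by omega))
  have hrle1 : ∀ i, i ≤ p → (r i : ℝ) ≤ 1 := by
    intro i hi
    have := rmono i p hi (le_refl p)
    rw [hp] at this
    exact_mod_cast this
  rcases eq_or_lt_of_le hkP with hrk | hrk
  · -- Case A : r k = m
    -- first chain: r i / m for i ≤ k
    have memA : ∀ i, ((r (min i k) : ℝ) / m) ∈ Set.Icc (0:ℝ) 1 := by
      intro i
      have hle : (r (min i k) : ℝ) ≤ m := by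
        have := rmono (min i k) k (min_le_right i k) hkle
        rw [← hrk]
        exact_mod_cast this
      exact ⟨div_nonneg (r (min i k)).2.1 hm0R.le, by rw [div_le_one hm0R]; exact hle⟩
    set tp : ℕ → unitInterval := fun i => ⟨(r (min i k) : ℝ) / m, memA i⟩ with htp
    have hcp : ∀ i < k, tp i < tp (i+1) := by
      intro i hi
      rw [← Subtype.coe_lt_coe]
      show (r (min i k) : ℝ) / m < (r (min (i+1) k) : ℝ) / m
      rw [Nat.min_eq_left (by omega), Nat.min_eq_left (by omega)]
      exact div_lt_div_of_pos_right (Subtype.coe_lt_coe.mpr (hcn i (by omega))) hm0R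
    -- second chain: (r (k+j) - m)/(1-m) for j ≤ p - k
    have memB : ∀ j, (((r (min (k+j) p) : ℝ) - m) / (1 - m)) ∈ Set.Icc (0:ℝ) 1 := by
      intro j
      have hge : (m:ℝ) ≤ r (min (k+j) p) := by
        rw [← hrk]
        exact_mod_cast rmono k (min (k+j) p) (le_min (Nat.le_add_right k j) hkle)
          (min_le_right _ p)
      have hle := hrle1 (min (k+j) p) (min_le_right _ p)
      exact ⟨div_nonneg (by linarith) (by linarith),
        by rw [div_le_one (by linarith)]; linarith⟩
    set tq : ℕ → unitInterval := fun j => ⟨((r (min (k+j) p) : ℝ) - m) / (1 - m), memB j⟩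
      with htq
    have hcq : ∀ j < p - k, tq j < tq (j+1) := by
      intro j hj
      rw [← Subtype.coe_lt_coe]
      show ((r (min (k+j) p) : ℝ) - m) / (1 - m) < ((r (min (k+j+1) p) : ℝ) - m) / (1 - m)
      rw [Nat.min_eq_left (by omega), Nat.min_eq_left (by omega)]
      have := Subtype.coe_lt_coe.mpr (hcn (k+j) (by omega))
      apply div_lt_div_of_pos_right (by linarith) (by linarith)
    have key1 := chain_sum_le (w := w) (a := subpath c 0 m) k tp hcp
    have key2 := chain_sum_le (w := w) (a := subpath c m 1) (p - k) tq hcq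
    have hsum : ∑ i ∈ Finset.range p, w (subpath c (r i) (r (i+1)))
        = (∑ i ∈ Finset.range k, w (subpath (subpath c 0 m) (tp i) (tp (i+1))))
          + ∑ j ∈ Finset.range (p-k), w (subpath (subpath c m 1) (tq j) (tq (j+1))) := by
      conv_lhs => rw [show p = k + (p - k) by omega, Finset.sum_range_add]
      congr 1
      · apply Finset.sum_congr rfl
        intro i hi
        rw [Finset.mem_range] at hi
        congr 1
        refine (subpath_subpath c 0 m (tp i) (tp (i+1)) (r i) (r (i+1)) ?_ ?_).symm
        · show (r i : ℝ) = (1 - (r (min i k) : ℝ) / m) * ((0:unitInterval):ℝ)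
            + (r (min i k) : ℝ) / m * m
          rw [Nat.min_eq_left (by omega)]
          have hX : (r i : ℝ) / m * m = r i := div_mul_cancel₀ _ hmne
          push_cast
          linear_combination (-1 : ℝ) * hX
        · show (r (i+1) : ℝ) = (1 - (r (min (i+1) k) : ℝ) / m) * ((0:unitInterval):ℝ)
            + (r (min (i+1) k) : ℝ) / m * m
          rw [Nat.min_eq_left (by omega)]
          have hX : (r (i+1) : ℝ) / m * m = r (i+1) := div_mul_cancel₀ _ hmne
          push_cast
          linear_combination (-1 : ℝ) * hX
      · apply Finset.sum_congr rfl
        intro j hj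
        rw [Finset.mem_range] at hj
        congr 1
        refine (subpath_subpath c m 1 (tq j) (tq (j+1)) (r (k+j)) (r (k+j+1)) ?_ ?_).symm
        · show (r (k+j) : ℝ) = (1 - ((r (min (k+j) p) : ℝ) - m) / (1 - m)) * m
            + ((r (min (k+j) p) : ℝ) - m) / (1 - m) * ((1:unitInterval):ℝ)
          rw [Nat.min_eq_left (by omega)]
          have hX : ((r (k+j) : ℝ) - m) / (1 - m) * (1 - m) = (r (k+j) : ℝ) - m :=
            div_mul_cancel₀ _ h1mne
          push_cast
          linear_combination (-1 : ℝ) * hX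
        · show (r (k+j+1) : ℝ) = (1 - ((r (min (k+j+1) p) : ℝ) - m) / (1 - m)) * m
            + ((r (min (k+j+1) p) : ℝ) - m) / (1 - m) * ((1:unitInterval):ℝ)
          rw [Nat.min_eq_left (by omega)]
          have hX : ((r (k+j+1) : ℝ) - m) / (1 - m) * (1 - m) = (r (k+j+1) : ℝ) - m :=
            div_mul_cancel₀ _ h1mne
          push_cast
          linear_combination (-1 : ℝ) * hX
    rw [hsum]
    exact add_le_add key1 key2
  · -- Case B : r k < m < r (k+1)
    have hkmR : ((r k : ℝ)) < m := Subtype.coe_lt_coe.mpr hrk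
    have hk1R : (m:ℝ) < r (k+1) := Subtype.coe_lt_coe.mpr hk1
    obtain ⟨n, hn⟩ : ∃ n, p - k = n + 1 := ⟨p - k - 1, by omega⟩
    -- first chain: length k+1, points r i / m for i ≤ k then 1
    have memA : ∀ i, ((r (min i k) : ℝ) / m) ∈ Set.Icc (0:ℝ) 1 := by
      intro i
      have h2 : (r (min i k) : ℝ) ≤ r k := by
        exact_mod_cast rmono (min i k) k (min_le_right i k) hkle
      exact ⟨div_nonneg (r (min i k)).2.1 hm0R.le,
        by rw [div_le_one hm0R]; linarith⟩
    set tp : ℕ → unitInterval := fun i =>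
      if i ≤ k then ⟨(r (min i k) : ℝ) / m, memA i⟩ else 1 with htp
    have htpv : ∀ i ≤ k, (tp i : ℝ) = (r i : ℝ) / m := by
      intro i hi
      simp only [htp, if_pos hi, Nat.min_eq_left hi]
    have hcp : ∀ i < k + 1, tp i < tp (i+1) := by
      intro i hi
      rw [← Subtype.coe_lt_coe]
      rcases Nat.lt_or_ge i k with h | h
      · rw [htpv i (by omega), htpv (i+1) (by omega)]
        exact div_lt_div_of_pos_right (Subtype.coe_lt_coe.mpr (hcn i (by omega))) hm0R
      · have hik : i = k := by omega
        rw [hik, htpv k (le_refl k)]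
        simp only [htp, if_neg (by omega : ¬ k + 1 ≤ k)]
        show (r k : ℝ) / m < ((1:unitInterval):ℝ)
        push_cast
        rw [div_lt_one hm0R]
        exact hkmR
    -- second chain: length p - k, points 0 then (r (k+j) - m)/(1-m)
    have memB : ∀ j, j ≠ 0 → (((r (min (k+j) p) : ℝ) - m) / (1 - m)) ∈ Set.Icc (0:ℝ) 1 := by
      intro j hj
      have hge : (r (k+1) : ℝ) ≤ r (min (k+j) p) := by
        exact_mod_cast rmono (k+1) (min (k+j) p) (le_min (by omega) (by omega))
          (min_le_right _ p)
      have hle := hrle1 (min (k+j) p) (min_le_right _ p)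
      exact ⟨div_nonneg (by linarith) (by linarith),
        by rw [div_le_one (by linarith)]; linarith⟩
    set tq : ℕ → unitInterval := fun j =>
      if h : j = 0 then 0 else ⟨((r (min (k+j) p) : ℝ) - m) / (1 - m), memB j h⟩ with htq
    have htqv : ∀ j, 1 ≤ j → j ≤ p - k → (tq j : ℝ) = ((r (k+j) : ℝ) - m) / (1 - m) := by
      intro j h1 h2
      simp only [htq, dif_neg (by omega : ¬ j = 0), Nat.min_eq_left (by omega : k + j ≤ p)]
    have hcq : ∀ j < p - k, tq j < tq (j+1) := by
      intro j hj
      rw [← Subtype.coe_lt_coe]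
      rcases Nat.eq_zero_or_pos j with h | h
      · subst h
        rw [htqv 1 (le_refl 1) (by omega)]
        simp only [htq, dif_pos rfl]
        show ((0:unitInterval):ℝ) < ((r (k+1) : ℝ) - m) / (1 - m)
        push_cast
        exact div_pos (by linarith) (by linarith)
      · rw [htqv j (by omega) (by omega), htqv (j+1) (by omega) (by omega),
          show k + (j+1) = k + j + 1 by omega]
        have := Subtype.coe_lt_coe.mpr (hcn (k+j) (by omega))
        exact div_lt_div_of_pos_right (by linarith) (by linarith)
    have key1 := chain_sum_le (w := w) (a := subpath c 0 m) (k+1) tp hcp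
    have key2 := chain_sum_le (w := w) (a := subpath c m 1) (p - k) tq hcq
    rw [hn] at key2
    -- identify the terms of the two half chains
    have hterm1 : ∀ i < k,
        subpath (subpath c 0 m) (tp i) (tp (i+1)) = subpath c (r i) (r (i+1)) := by
      intro i hi
      refine subpath_subpath c 0 m (tp i) (tp (i+1)) (r i) (r (i+1)) ?_ ?_
      · rw [htpv i (by omega)]
        have hX : (r i : ℝ) / m * m = r i := div_mul_cancel₀ _ hmne
        push_cast
        linear_combination (-1 : ℝ) * hX
      · rw [htpv (i+1) (by omega)]
        have hX : (r (i+1) : ℝ) / m * m = r (i+1) := div_mul_cancel₀ _ hmne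
        push_cast
        linear_combination (-1 : ℝ) * hX
    have htermk : subpath (subpath c 0 m) (tp k) (tp (k+1)) = subpath c (r k) m := by
      have htp1 : tp (k+1) = 1 := by simp only [htp, if_neg (by omega : ¬ k + 1 ≤ k)]
      refine subpath_subpath c 0 m (tp k) (tp (k+1)) (r k) m ?_ ?_
      · rw [htpv k (le_refl k)]
        have hX : (r k : ℝ) / m * m = r k := div_mul_cancel₀ _ hmne
        push_cast
        linear_combination (-1 : ℝ) * hX
      · rw [htp1]
        push_cast
        ring
    have hterm0 : subpath (subpath c m 1) (tq 0) (tq 1) = subpath c m (r (k+1)) := by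
      have htq0 : tq 0 = 0 := by simp only [htq, dif_pos rfl]
      refine subpath_subpath c m 1 (tq 0) (tq 1) m (r (k+1)) ?_ ?_
      · rw [htq0]
        push_cast
        ring
      · rw [htqv 1 (le_refl 1) (by omega)]
        have hX : ((r (k+1) : ℝ) - m) / (1 - m) * (1 - m) = (r (k+1) : ℝ) - m :=
          div_mul_cancel₀ _ h1mne
        push_cast
        linear_combination (-1 : ℝ) * hX
    have hterm2 : ∀ j, 1 ≤ j → j < p - k →
        subpath (subpath c m 1) (tq j) (tq (j+1)) = subpath c (r (k+j)) (r (k+j+1)) := by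
      intro j h1 h2
      refine subpath_subpath c m 1 (tq j) (tq (j+1)) (r (k+j)) (r (k+j+1)) ?_ ?_
      · rw [htqv j h1 (by omega)]
        have hX : ((r (k+j) : ℝ) - m) / (1 - m) * (1 - m) = (r (k+j) : ℝ) - m :=
          div_mul_cancel₀ _ h1mne
        push_cast
        linear_combination (-1 : ℝ) * hX
      · rw [htqv (j+1) (by omega) (by omega), show k + (j+1) = k + j + 1 by omega]
        have hX : ((r (k+j+1) : ℝ) - m) / (1 - m) * (1 - m) = (r (k+j+1) : ℝ) - m :=
          div_mul_cancel₀ _ h1mne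
        push_cast
        linear_combination (-1 : ℝ) * hX
    -- split the original sum
    have hsplit : ∑ i ∈ Finset.range p, w (subpath c (r i) (r (i+1)))
        = (∑ i ∈ Finset.range k, w (subpath c (r i) (r (i+1))))
          + w (subpath c (r k) (r (k+1)))
          + ∑ j ∈ Finset.range n, w (subpath c (r (k+1+j)) (r (k+1+j+1))) := by
      conv_lhs => rw [show p = (k + 1) + n by omega, Finset.sum_range_add]
      rw [Finset.sum_range_succ]
    rw [hsplit]
    have hmid := w_subdiv (c := c) (s := r k) (m := m) (t := r (k+1)) hc hrk hk1 hw1 hw2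
    calc (∑ i ∈ Finset.range k, w (subpath c (r i) (r (i+1))))
          + w (subpath c (r k) (r (k+1)))
          + ∑ j ∈ Finset.range n, w (subpath c (r (k+1+j)) (r (k+1+j+1)))
        ≤ (∑ i ∈ Finset.range k, w (subpath c (r i) (r (i+1))))
          + (w (subpath c (r k) m) + w (subpath c m (r (k+1))))
          + ∑ j ∈ Finset.range n, w (subpath c (r (k+1+j)) (r (k+1+j+1))) := by
          gcongr
      _ = (∑ i ∈ Finset.range (k+1), w (subpath (subpath c 0 m) (tp i) (tp (i+1))))
          + ∑ j ∈ Finset.range (n+1), w (subpath (subpath c m 1) (tq j) (tq (j+1))) := by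
          rw [Finset.sum_range_succ, Finset.sum_range_succ']
          have e1 : ∑ i ∈ Finset.range k, w (subpath (subpath c 0 m) (tp i) (tp (i+1)))
              = ∑ i ∈ Finset.range k, w (subpath c (r i) (r (i+1))) :=
            Finset.sum_congr rfl (fun i hi => by
              rw [hterm1 i (Finset.mem_range.mp hi)])
          have e2 : ∑ j ∈ Finset.range n,
                w (subpath (subpath c m 1) (tq (j+1)) (tq (j+1+1)))
              = ∑ j ∈ Finset.range n, w (subpath c (r (k+1+j)) (r (k+1+j+1))) :=
            Finset.sum_congr rfl (fun j hj => by
              have hjn : j < n := Finset.mem_range.mp hj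
              have hA : 1 ≤ j + 1 := by omega
              have hB : j + 1 < p - k := by omega
              rw [show k + 1 + j = k + (j+1) by omega]
              rw [hterm2 (j+1) hA hB])
          rw [e1, e2, htermk, hterm0]
          ring
      _ ≤ linWeight w (subpath c 0 m) + linWeight w (subpath c m 1) := add_le_add key1 key2

end Split

section Halves
variable {X : Type*}

noncomputable def half : unitInterval := ⟨1/2, by norm_num⟩

lemma half_pos : (0:unitInterval) < half := by
  rw [← Subtype.coe_lt_coe]; norm_num [half]

lemma half_lt_one : half < (1:unitInterval) := by
  rw [← Subtype.coe_lt_coe]; norm_num [half]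

lemma subpath_concat_left (a b : unitInterval → X) :
    subpath (concat a b) 0 half = a := by
  funext u
  show concat a b ⟨(1 - (u:ℝ)) * ((0:unitInterval):ℝ) + u * ((half:unitInterval):ℝ), _⟩ = a u
  have hval : (1 - (u:ℝ)) * ((0:unitInterval):ℝ) + u * ((half:unitInterval):ℝ) = u / 2 := by
    show (1 - (u:ℝ)) * ((0:unitInterval):ℝ) + u * (1/2) = u / 2
    push_cast
    ring
  unfold concat
  rw [dif_pos (show (1 - (u:ℝ)) * ((0:unitInterval):ℝ) + u * ((half:unitInterval):ℝ) ≤ 1/2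
    by rw [hval]; have := u.2.2; linarith)]
  refine aeq a ?_
  show 2 * ((1 - (u:ℝ)) * ((0:unitInterval):ℝ) + (u:ℝ) * ((half:unitInterval):ℝ)) = (u:ℝ)
  rw [hval]; ring

lemma subpath_concat_right (a b : unitInterval → X) (hab : a 1 = b 0) :
    subpath (concat a b) half 1 = b := by
  funext u
  show concat a b ⟨(1 - (u:ℝ)) * ((half:unitInterval):ℝ) + u * ((1:unitInterval):ℝ), _⟩ = b u
  have hval : (1 - (u:ℝ)) * ((half:unitInterval):ℝ) + u * ((1:unitInterval):ℝ)
      = (1 + (u:ℝ)) / 2 := by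
    show (1 - (u:ℝ)) * (1/2) + u * ((1:unitInterval):ℝ) = (1 + (u:ℝ)) / 2
    push_cast
    ring
  unfold concat
  by_cases h : (1 - (u:ℝ)) * ((half:unitInterval):ℝ) + u * ((1:unitInterval):ℝ) ≤ 1/2
  · -- then u = 0
    have hu0 : (u:ℝ) = 0 := by
      rw [hval] at h
      have := u.2.1
      linarith
    have h2 : u = 0 := by apply Subtype.ext; rw [hu0]; norm_num
    subst h2
    rw [dif_pos h, ← hab]
    refine aeq a ?_
    show 2 * ((1 - ((0:unitInterval):ℝ)) * ((half:unitInterval):ℝ)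
      + ((0:unitInterval):ℝ) * ((1:unitInterval):ℝ)) = ((1:unitInterval):ℝ)
    rw [hval, hu0]; norm_num
  · rw [dif_neg h]
    refine aeq b ?_
    show 2 * ((1 - (u:ℝ)) * ((half:unitInterval):ℝ) + (u:ℝ) * ((1:unitInterval):ℝ)) - 1 = (u:ℝ)
    rw [hval]; push_cast; ring

end Halves

section Reparam
variable {X : Type*} [TopologicalSpace X]

/-- Lemma R: reparametrising a subpath. -/
lemma w_subpath_comp {w : (unitInterval → X) → ℝ≥0∞} {a : unitInterval → X}
    (ha : Continuous a) {ρ : unitInterval → unitInterval} (hρc : Continuous ρ)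
    (hρm : StrictMono ρ) {s t : unitInterval} (hst : s < t)
    (hw2 : ∀ (f : unitInterval → X) (g : unitInterval → unitInterval),
      Continuous f → Continuous g → StrictMono g → w (f ∘ g) ≤ w f) :
    w (subpath (a ∘ ρ) s t) ≤ w (subpath a (ρ s) (ρ t)) := by
  have hstR : (s:ℝ) < t := Subtype.coe_lt_coe.mpr hst
  have hρR : ((ρ s : ℝ)) < ρ t := Subtype.coe_lt_coe.mpr (hρm hst)
  have hden : ((ρ t : ℝ)) - ρ s ≠ 0 := by linarith
  -- the affine point map
  set afp : unitInterval → unitInterval := fun u =>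
    ⟨(1 - (u:ℝ)) * s + u * t, Set.mem_Icc.mpr
      ⟨by nlinarith [u.2.1, u.2.2, s.2.1, t.2.1], by nlinarith [u.2.1, u.2.2, s.2.2, t.2.2]⟩⟩
    with hafp
  have hafp_mem : ∀ u : unitInterval, s ≤ afp u ∧ afp u ≤ t := by
    intro u
    constructor
    · rw [← Subtype.coe_le_coe]
      show (s:ℝ) ≤ (1 - (u:ℝ)) * s + u * t
      nlinarith [u.2.1, u.2.2]
    · rw [← Subtype.coe_le_coe]
      show (1 - (u:ℝ)) * s + u * t ≤ t
      nlinarith [u.2.1, u.2.2]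
  set τ : unitInterval → unitInterval := fun u =>
    ⟨((ρ (afp u) : ℝ) - ρ s) / ((ρ t : ℝ) - ρ s), Set.mem_Icc.mpr
      ⟨div_nonneg (by
          have := Subtype.coe_le_coe.mpr (hρm.monotone (hafp_mem u).1); linarith)
        (by linarith),
       by
        rw [div_le_one (by linarith)]
        have := Subtype.coe_le_coe.mpr (hρm.monotone (hafp_mem u).2)
        linarith⟩⟩ with hτ
  have hτc : Continuous τ := by
    apply Continuous.subtype_mk
    apply Continuous.div_const
    apply Continuous.sub _ continuous_const
    apply continuous_subtype_val.comp
    apply hρc.comp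
    apply Continuous.subtype_mk
    fun_prop
  have hτm : StrictMono τ := by
    intro u v huv
    rw [← Subtype.coe_lt_coe]
    show ((ρ (afp u) : ℝ) - ρ s) / ((ρ t : ℝ) - ρ s)
        < ((ρ (afp v) : ℝ) - ρ s) / ((ρ t : ℝ) - ρ s)
    have hafm : afp u < afp v := by
      rw [← Subtype.coe_lt_coe]
      show (1 - (u:ℝ)) * s + u * t < (1 - (v:ℝ)) * s + v * t
      have := Subtype.coe_lt_coe.mpr huv
      nlinarith
    have := Subtype.coe_lt_coe.mpr (hρm hafm)
    apply div_lt_div_of_pos_right (by linarith) (by linarith)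
  have hcomp : subpath a (ρ s) (ρ t) ∘ τ = subpath (a ∘ ρ) s t := by
    funext u
    show a _ = a (ρ (afp u))
    rw [show ρ (afp u) = ⟨((ρ (afp u)) : ℝ), (ρ (afp u)).2⟩ from rfl]
    apply aeq
    show (1 - ((ρ (afp u) : ℝ) - ρ s) / ((ρ t : ℝ) - ρ s)) * (ρ s : ℝ)
        + ((ρ (afp u) : ℝ) - ρ s) / ((ρ t : ℝ) - ρ s) * (ρ t : ℝ) = ρ (afp u)
    field_simp
    ring
  rw [← hcomp]
  exact hw2 _ _ (continuous_subpath ha _ _) hτc hτm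

end Reparam

section VChain
variable {X : Type*} [TopologicalSpace X]

lemma v_chain {v : (unitInterval → X) → ℝ≥0∞}
    (hv1 : ∀ a b : unitInterval → X, Continuous a → Continuous b → a 1 = b 0 →
      v (concat a b) = v a + v b)
    (hv2 : ∀ (f : unitInterval → X) (g : unitInterval → unitInterval),
      Continuous f → Continuous g → StrictMono g → v (f ∘ g) ≤ v f)
    {a : unitInterval → X} (ha : Continuous a) :
    ∀ (p : ℕ) (t : ℕ → unitInterval), (∀ i < p, t i < t (i+1)) →
      ∑ i ∈ Finset.range p, v (subpath a (t i) (t (i+1))) ≤ v (subpath a (t 0) (t p)) := by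
  intro p
  induction p with
  | zero => intro t ht; simp
  | succ p ih =>
    intro t ht
    rw [Finset.sum_range_succ]
    rcases Nat.eq_zero_or_pos p with hp | hp
    · subst hp
      simp
    · have h0p : t 0 < t p := chain_strictMono ht 0 p hp (by omega)
      have hpt : t p < t (p+1) := ht p (by omega)
      calc (∑ i ∈ Finset.range p, v (subpath a (t i) (t (i+1))))
            + v (subpath a (t p) (t (p+1)))
          ≤ v (subpath a (t 0) (t p)) + v (subpath a (t p) (t (p+1))) := by
            gcongr
            exact ih t (fun i hi => ht i (by omega))
        _ ≤ v (subpath a (t 0) (t (p+1))) := v_subdiv ha h0p hpt hv1 hv2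

end VChain

end LinAux

open LinAux in
/-- For a w-space `X` with weight `w`, the linearisation `L` is the least linear weight
above `w`: it satisfies the w-space axioms, it is linear, it dominates `w`, and any
linear weight `v` satisfying the w-space axioms with `v ≥ w` satisfies `v ≥ L`. -/
theorem linWeight_least_linear {X : Type*} [TopologicalSpace X]
    (w : (unitInterval → X) → ℝ≥0∞)
    (hw0 : ∀ x : X, w (fun _ => x) = 0)
    (hw1 : ∀ a b : unitInterval → X, Continuous a → Continuous b → a 1 = b 0 →
      w (concat a b) ≤ w a + w b)
    (hw2 : ∀ (a : unitInterval → X) (ρ : unitInterval → unitInterval),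
      Continuous a → Continuous ρ → StrictMono ρ → w (a ∘ ρ) ≤ w a) :
    (∀ x : X, linWeight w (fun _ => x) = 0) ∧
    (∀ a b : unitInterval → X, Continuous a → Continuous b → a 1 = b 0 →
      linWeight w (concat a b) ≤ linWeight w a + linWeight w b) ∧
    (∀ (a : unitInterval → X) (ρ : unitInterval → unitInterval),
      Continuous a → Continuous ρ → StrictMono ρ →
      linWeight w (a ∘ ρ) ≤ linWeight w a) ∧
    (∀ a b : unitInterval → X, Continuous a → Continuous b → a 1 = b 0 →
      linWeight w (concat a b) = linWeight w a + linWeight w b) ∧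
    (∀ a : unitInterval → X, Continuous a → w a ≤ linWeight w a) ∧
    (∀ v : (unitInterval → X) → ℝ≥0∞,
      (∀ x : X, v (fun _ => x) = 0) →
      (∀ a b : unitInterval → X, Continuous a → Continuous b → a 1 = b 0 →
        v (concat a b) = v a + v b) →
      (∀ (a : unitInterval → X) (ρ : unitInterval → unitInterval),
        Continuous a → Continuous ρ → StrictMono ρ → v (a ∘ ρ) ≤ v a) →
      (∀ a : unitInterval → X, Continuous a → w a ≤ v a) →
      ∀ a : unitInterval → X, Continuous a → linWeight w a ≤ v a) := by
  have hlin : ∀ a b : unitInterval → X, Continuous a → Continuous b → a 1 = b 0 →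
      linWeight w (concat a b) = linWeight w a + linWeight w b := by
    intro a b ha hb hab
    have hcc := continuous_concat ha hb hab
    apply le_antisymm
    · have h := split_le (w := w) (concat a b) hcc half half_pos half_lt_one hw1 hw2
      rwa [subpath_concat_left, subpath_concat_right a b hab] at h
    · have h := split_ge (w := w) (concat a b) half half_pos half_lt_one
      rwa [subpath_concat_left, subpath_concat_right a b hab] at h
  refine ⟨?_, ?_, ?_, hlin, ?_, ?_⟩
  · -- constant paths
    intro x
    simp [linWeight, subpath_const, hw0]
  · -- wsp.1
    intro a b ha hb hab
    exact le_of_eq (hlin a b ha hb hab)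
  · -- wsp.2
    intro a ρ ha hρc hρm
    rw [linWeight]
    apply iSup_le
    rintro ⟨⟨p, t⟩, h0, hp, hcn⟩
    simp only at h0 hp hcn ⊢
    calc ∑ i ∈ Finset.range p, w (subpath (a ∘ ρ) (t i) (t (i+1)))
        ≤ ∑ i ∈ Finset.range p, w (subpath a (ρ (t i)) (ρ (t (i+1)))) :=
          Finset.sum_le_sum (fun i hi =>
            w_subpath_comp ha hρc hρm (hcn i (Finset.mem_range.mp hi)) hw2)
      _ ≤ linWeight w a :=
          chain_sum_le p (fun i => ρ (t i)) (fun i hi => hρm (hcn i hi))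
  · -- w ≤ L
    intro a _
    have h := le_iSup (fun P : Part => ∑ i ∈ Finset.range P.val.1,
      w (subpath a (P.val.2 i) (P.val.2 (i + 1))))
      ⟨(1, fun i => if i = 0 then 0 else 1), by
        refine ⟨by simp, by simp, fun i hi => ?_⟩
        interval_cases i
        simp only [if_pos rfl, if_neg one_ne_zero]
        norm_num [← Subtype.coe_lt_coe]⟩
    rw [linWeight]
    refine le_trans (le_of_eq ?_) h
    simp [Finset.sum_range_one, subpath_self]
  · -- minimality
    intro v hv0 hv1 hv2 hwv a ha
    rw [linWeight]
    apply iSup_le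
    rintro ⟨⟨p, t⟩, h0, hp, hcn⟩
    simp only at h0 hp hcn ⊢
    calc ∑ i ∈ Finset.range p, w (subpath a (t i) (t (i+1)))
        ≤ ∑ i ∈ Finset.range p, v (subpath a (t i) (t (i+1))) :=
          Finset.sum_le_sum (fun i _ => hwv _ (continuous_subpath ha _ _))
      _ ≤ v (subpath a (t 0) (t p)) := v_chain hv1 hv2 ha p t hcn
      _ = v a := by rw [h0, hp, subpath_self]
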